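/- Let u₁, …, u_d be an orthonormal basis of ℝ^d, let λ₁, …, λ_d ≥ 0, let μ ∈ ℝ^d, and let σ : ℝ → ℝ be differentiable with σ(t) > 0 for all t. Define the Gaussian denoiser D_G(z; s) = μ + ∑_{i=1}^d (λᵢ/(λᵢ + s²)) ⟨uᵢ, z − μ⟩ uᵢ. Fix T ∈ ℝ and x_T ∈ ℝ^d, and define x(t) = μ + ∑_{i=1}^d √((σ(t)² + λᵢ)/(σ(T)² + λᵢ)) ⟨uᵢ, x_T − μ⟩ uᵢ. Then x(T) = x_T, and for every t ∈ ℝ the function x is differentiable at t with derivative x′(t) = (σ′(t)/σ(t))·(x(t) − D_G(x(t); σ(t))); that is, x(t) is the closed-form solution of the probability-flow ODE dx/dt = −σ̇(t)σ(t)∇_x log p(x; σ(t)) for the multivariate Gaussian data distribution with mean μ and covariance ∑ᵢ λᵢ uᵢuᵢᵀ. -/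

import Mathlib

/-!
In the eigenbasis `u` everything decouples: the `i`-th coordinate of `x(t) − μ` is
`φᵢ(t) ⟨uᵢ, x_T − μ⟩`, where `φᵢ(t) = √((σ(t)² + λᵢ)/(σ(T)² + λᵢ))`, and `z − D_G(z; s)` multiplies
the `i`-th coordinate of `z − μ` by `s²/(λᵢ + s²)`. The ODE thus reduces to the scalar identity
`φᵢ′ = (σ′/σ) · σ²/(λᵢ + σ²) · φᵢ`, which follows from `(φᵢ²)′ = 2σσ′/(σ(T)² + λᵢ)` and
`φᵢ² = (σ² + λᵢ)/(σ(T)² + λᵢ)`.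
-/

open scoped RealInnerProductSpace

/-- The Gaussian denoiser at noise level `s` for the Gaussian distribution with mean `μ` and
covariance `∑ᵢ λᵢ uᵢuᵢᵀ`: `D_G(z; s) = μ + ∑ᵢ (λᵢ/(λᵢ + s²)) ⟨uᵢ, z − μ⟩ uᵢ`. -/
noncomputable def gaussianDenoiser {d : ℕ}
    (u : OrthonormalBasis (Fin d) ℝ (EuclideanSpace ℝ (Fin d)))
    (lam : Fin d → ℝ) (μ : EuclideanSpace ℝ (Fin d))
    (z : EuclideanSpace ℝ (Fin d)) (s : ℝ) : EuclideanSpace ℝ (Fin d) :=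
  μ + ∑ i, ((lam i / (lam i + s ^ 2)) * ⟪u i, z - μ⟫) • u i

/-- The closed-form trajectory
`x(t) = μ + ∑ᵢ √((σ(t)² + λᵢ)/(σ(T)² + λᵢ)) ⟨uᵢ, x_T − μ⟩ uᵢ`. -/
noncomputable def gaussianTrajectory {d : ℕ}
    (u : OrthonormalBasis (Fin d) ℝ (EuclideanSpace ℝ (Fin d)))
    (lam : Fin d → ℝ) (μ : EuclideanSpace ℝ (Fin d)) (σ : ℝ → ℝ) (T : ℝ)
    (xT : EuclideanSpace ℝ (Fin d)) (t : ℝ) : EuclideanSpace ℝ (Fin d) :=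
  μ + ∑ i, (Real.sqrt ((σ t ^ 2 + lam i) / (σ T ^ 2 + lam i)) * ⟪u i, xT - μ⟫) • u i

theorem hasDerivAt_sqrt_sq_add_div {σ : ℝ → ℝ} {σ' t l K : ℝ} (hσ : HasDerivAt σ σ' t)
    (hσt : σ t ≠ 0) (hl : 0 < σ t ^ 2 + l) (hK : 0 < K) :
    HasDerivAt (fun s => √((σ s ^ 2 + l) / K))
      (σ' / σ t * (σ t ^ 2 / (l + σ t ^ 2) * √((σ t ^ 2 + l) / K))) t := by
  have hpos : 0 < (σ t ^ 2 + l) / K := div_pos hl hK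
  have hφsq : √((σ t ^ 2 + l) / K) ^ 2 * K = σ t ^ 2 + l := by
    rw [Real.sq_sqrt hpos.le, div_mul_cancel₀ _ hK.ne']
  have hsq : HasDerivAt (fun s => (σ s ^ 2 + l) / K) (2 * σ t * σ' / K) t := by
    simpa using ((hσ.fun_pow 2).add_const l).div_const K
  convert hsq.sqrt hpos.ne' using 1
  field_simp [(add_comm l _ ▸ hl).ne']
  linear_combination σ' * hφsq

section EigenCoordinates

variable {d : ℕ} (u : OrthonormalBasis (Fin d) ℝ (EuclideanSpace ℝ (Fin d))) (lam : Fin d → ℝ)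
  (μ : EuclideanSpace ℝ (Fin d))

theorem sub_gaussianDenoiser {z : EuclideanSpace ℝ (Fin d)} {s : ℝ}
    (h : ∀ i, lam i + s ^ 2 ≠ 0) :
    z - gaussianDenoiser u lam μ z s = ∑ i, (s ^ 2 / (lam i + s ^ 2) * ⟪u i, z - μ⟫) • u i := by
  have hz : z = μ + ∑ i, ⟪u i, z - μ⟫ • u i := by rw [u.sum_repr', add_sub_cancel]
  nth_rw 1 [hz]
  rw [gaussianDenoiser, add_sub_add_left_eq_sub, ← Finset.sum_sub_distrib]
  refine Finset.sum_congr rfl fun i _ => ?_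
  rw [← sub_smul]
  congr 1
  field_simp [h i]
  ring

variable (σ : ℝ → ℝ) (T : ℝ) (xT : EuclideanSpace ℝ (Fin d))

theorem gaussianTrajectory_self (h : ∀ i, σ T ^ 2 + lam i ≠ 0) :
    gaussianTrajectory u lam μ σ T xT T = xT := by
  simp only [gaussianTrajectory, div_self (h _), Real.sqrt_one, one_mul, u.sum_repr',
    add_sub_cancel]

theorem inner_gaussianTrajectory_sub (i : Fin d) (t : ℝ) :
    ⟪u i, gaussianTrajectory u lam μ σ T xT t - μ⟫ =
      √((σ t ^ 2 + lam i) / (σ T ^ 2 + lam i)) * ⟪u i, xT - μ⟫ := by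
  rw [gaussianTrajectory, add_sub_cancel_left, u.orthonormal.inner_right_fintype]

theorem hasDerivAt_gaussianTrajectory {φ' : Fin d → ℝ} {t : ℝ}
    (h : ∀ i, HasDerivAt (fun s => √((σ s ^ 2 + lam i) / (σ T ^ 2 + lam i))) (φ' i) t) :
    HasDerivAt (gaussianTrajectory u lam μ σ T xT) (∑ i, (φ' i * ⟪u i, xT - μ⟫) • u i) t :=
  (HasDerivAt.fun_sum fun i _ => ((h i).mul_const _).smul_const (u i)).const_add μ

end EigenCoordinates

/-- The trajectory `x(t)` satisfies `x(T) = x_T` and solves the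
probability-flow ODE `x′(t) = (σ′(t)/σ(t))(x(t) − D_G(x(t); σ(t)))` for the multivariate
Gaussian data distribution with mean `μ` and covariance `∑ᵢ λᵢ uᵢuᵢᵀ`. -/
theorem gaussian_probability_flow_ode_closed_form
    (d : ℕ) (u : OrthonormalBasis (Fin d) ℝ (EuclideanSpace ℝ (Fin d)))
    (lam : Fin d → ℝ) (hlam : ∀ i, 0 ≤ lam i)
    (μ : EuclideanSpace ℝ (Fin d))
    (σ σ' : ℝ → ℝ) (hσ : ∀ t, HasDerivAt σ (σ' t) t) (hσpos : ∀ t, 0 < σ t)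
    (T : ℝ) (xT : EuclideanSpace ℝ (Fin d)) :
    gaussianTrajectory u lam μ σ T xT T = xT ∧
      ∀ t, HasDerivAt (gaussianTrajectory u lam μ σ T xT)
        ((σ' t / σ t) •
          (gaussianTrajectory u lam μ σ T xT t -
            gaussianDenoiser u lam μ (gaussianTrajectory u lam μ σ T xT t) (σ t))) t := by
  have hpos : ∀ t i, 0 < σ t ^ 2 + lam i := fun t i => by
    have := hσpos t; have := hlam i; positivity
  refine ⟨gaussianTrajectory_self u lam μ σ T xT fun i => (hpos T i).ne', fun t => ?_⟩
  have hφ := fun i => hasDerivAt_sqrt_sq_add_div (hσ t) (hσpos t).ne' (hpos t i) (hpos T i)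
  convert hasDerivAt_gaussianTrajectory u lam μ σ T xT hφ using 1
  rw [sub_gaussianDenoiser u lam μ fun i => by linarith [hpos t i], Finset.smul_sum]
  simp only [inner_gaussianTrajectory_sub, smul_smul, mul_assoc]
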